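/- arXiv:2405.13886 — 2 statements merged into one kernel-verified Lean document; each statement's English description precedes it below -/
import Mathlib

section
/- (Theorem 1) Let |τ_β⟩_{AB} = Z^{-1/2} Σ_x e^{-βE_x/2}|E_x⟩_A|E_x⟩_B be the thermal field double state for Hamiltonian H on B, and |Φ⟩_{A'R} a maximally entangled state. For any teleportation protocol consisting of a rank-one projective measurement {Π_x} on AA' followed by conditional unitaries {U_x} on B, the average teleported entanglement entropy S(B) := Σ_x p_x S(ρ_x) and average extracted energy E := Σ_x p_x Tr(H(ρ_x - U_x ρ_x U_x†)) satisfy S(B) + βE ≤ S(τ_β), where ρ_x is Bob's post-measurement state with outcome x occurring with probability p_x, and τ_β = e^{-βH}/Z. -/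
open Matrix BigOperators Finset
open scoped Kronecker ComplexOrder

noncomputable section

variable {n : Type*} [Fintype n] [DecidableEq n]

/-- Functional calculus for Hermitian matrices (junk value `0` otherwise). -/
def matFun (f : ℝ → ℝ) (A : Matrix n n ℂ) : Matrix n n ℂ :=
  if hA : A.IsHermitian then
    (hA.eigenvectorUnitary : Matrix n n ℂ) *
      Matrix.diagonal (fun i => (f (hA.eigenvalues i) : ℂ)) *
      star (hA.eigenvectorUnitary : Matrix n n ℂ)
  else 0

/-- Von Neumann entropy (natural log). -/
def vnEntropy (A : Matrix n n ℂ) : ℝ :=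
  if hA : A.IsHermitian then ∑ i, Real.negMulLog (hA.eigenvalues i) else 0

/-- Umegaki relative entropy `Tr ρ (log ρ - log σ)`. -/
def relEnt (ρ σ : Matrix n n ℂ) : ℝ :=
  ((ρ * (matFun Real.log ρ - matFun Real.log σ)).trace).re

/-- Partition function `Z = Tr e^{-βH}`. -/
def gibbsZ (β : ℝ) (H : Matrix n n ℂ) : ℝ :=
  ((matFun (fun x => Real.exp (-(β * x))) H).trace).re

/-- Gibbs (thermal) state `e^{-βH}/Z`. -/
def gibbs (β : ℝ) (H : Matrix n n ℂ) : Matrix n n ℂ :=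
  ((gibbsZ β H : ℂ)⁻¹) • matFun (fun x => Real.exp (-(β * x))) H

/-- Density matrix predicate. -/
def IsDensity (ρ : Matrix n n ℂ) : Prop := ρ.PosSemidef ∧ ρ.trace = 1

def IsUnitaryMat (U : Matrix n n ℂ) : Prop := U ∈ Matrix.unitaryGroup n ℂ

/-- Outer product `|v⟩⟨v|`. -/
def outer {m : Type*} (v : m → ℂ) : Matrix m m ℂ :=
  Matrix.of fun i j => v i * (starRingEnd ℂ) (v j)

/-- Unnormalized maximally entangled vector `∑ₓ |x⟩|x⟩`. -/
def maxEnt (d : ℕ) : Fin d × Fin d → ℂ := fun p => if p.1 = p.2 then 1 else 0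

/-- Positive square root of a Hermitian matrix (via eigenvalues). -/
def matSqrt (A : Matrix n n ℂ) : Matrix n n ℂ := matFun Real.sqrt A

/-- Partial trace over the first tensor factor. -/
def ptraceFst {m k : Type*} [Fintype m] (ρ : Matrix (m × k) (m × k) ℂ) : Matrix k k ℂ :=
  Matrix.of fun j1 j2 => ∑ i, ρ (i, j1) (i, j2)

/-- Partial trace over the second tensor factor. -/
def ptraceSnd {m k : Type*} [Fintype k] (ρ : Matrix (m × k) (m × k) ℂ) : Matrix m m ℂ :=
  Matrix.of fun i1 i2 => ∑ j, ρ (i1, j) (i2, j)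

/-!
Measuring `AA'` does not disturb the reduced state of `BR` (the measurement is complete and
acts on the other factor), so Bob's average post-measurement state `∑ₓ pₓ ρₓ` is his marginal of
the initial state, the Gibbs state `τ_β`. For each outcome,
`S(ρₓ) = S(Uₓ ρₓ Uₓ†) ≤ β Tr(H Uₓ ρₓ Uₓ†) + log Z`: the entropy of a state is at most the Shannon
entropy of its diagonal (the diagonal is the spectrum mixed by the doubly stochastic matrix
`|Vᵢⱼ|²`), which by Gibbs' inequality is at most its cross entropy with the Gibbs weights.
Averaging over `x`, the energies `Tr(H ρₓ)` add up to `Tr(H τ_β)`, and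
`S(τ_β) = β Tr(H τ_β) + log Z`.
-/

theorem Real.negMulLog_le_neg_mul_log_add_sub {x y : ℝ} (hx : 0 ≤ x) (hy : 0 < y) :
    Real.negMulLog x ≤ -(x * Real.log y) + (y - x) := by
  calc Real.negMulLog x = y * Real.negMulLog (x / y) + x / y * Real.negMulLog y := by
        rw [← Real.negMulLog_mul, div_mul_cancel₀ x hy.ne']
    _ ≤ y * (1 - x / y) + x / y * Real.negMulLog y := by
        gcongr; exact Real.negMulLog_le_one_sub_self (div_nonneg hx hy.le)
    _ = -(x * Real.log y) + (y - x) := by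
        rw [Real.negMulLog]; field_simp; ring

omit [DecidableEq n] in
theorem sum_negMulLog_le_sum_mul_neg_log {p q : n → ℝ} (hp : ∀ i, 0 ≤ p i) (hq : ∀ i, 0 < q i)
    (hsum : ∑ i, p i = ∑ i, q i) :
    ∑ i, Real.negMulLog (p i) ≤ ∑ i, p i * -Real.log (q i) := by
  calc ∑ i, Real.negMulLog (p i) ≤ ∑ i, (-(p i * Real.log (q i)) + (q i - p i)) :=
        sum_le_sum fun i _ => Real.negMulLog_le_neg_mul_log_add_sub (hp i) (hq i)
    _ = ∑ i, p i * -Real.log (q i) := by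
        simp only [sum_add_distrib, sum_sub_distrib, hsum, sub_self, add_zero, mul_neg]

theorem sum_negMulLog_le_sum_negMulLog_mulVec {D : Matrix n n ℝ} (hD : D ∈ doublyStochastic ℝ n)
    {p : n → ℝ} (hp : ∀ j, 0 ≤ p j) :
    ∑ j, Real.negMulLog (p j) ≤ ∑ i, Real.negMulLog ((D *ᵥ p) i) := by
  calc ∑ j, Real.negMulLog (p j) = ∑ i, ∑ j, D i j * Real.negMulLog (p j) := by
        rw [sum_comm]; simp only [← sum_mul, sum_col_of_mem_doublyStochastic hD, one_mul]
    _ ≤ ∑ i, Real.negMulLog ((D *ᵥ p) i) := sum_le_sum fun i _ => by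
        simpa [mulVec, dotProduct] using Real.concaveOn_negMulLog.le_map_sum
          (fun j _ => nonneg_of_mem_doublyStochastic hD) (sum_row_of_mem_doublyStochastic hD i)
          (fun j _ => Set.mem_Ici.mpr (hp j))

theorem normSq_mem_doublyStochastic {W : Matrix n n ℂ} (hW : W ∈ unitaryGroup n ℂ) :
    (of fun i j => Complex.normSq (W i j)) ∈ doublyStochastic ℝ n := by
  rw [mem_doublyStochastic_iff_sum]
  refine ⟨fun i j => Complex.normSq_nonneg _, fun i => ?_, fun j => ?_⟩
  · have h := congr_fun₂ (mem_unitaryGroup_iff.mp hW) i i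
    simp only [mul_apply, star_apply, Complex.star_def, Complex.mul_conj, one_apply_eq] at h
    exact_mod_cast h
  · have h := congr_fun₂ (mem_unitaryGroup_iff'.mp hW) j j
    simp only [mul_apply, star_apply, Complex.star_def, ← Complex.normSq_eq_conj_mul_self,
      one_apply_eq] at h
    exact_mod_cast h

theorem conj_diagonal_apply_self (W : Matrix n n ℂ) (r : n → ℝ) (i : n) :
    (W * diagonal (fun j => (r j : ℂ)) * star W) i i
      = (((of fun i j => Complex.normSq (W i j)) *ᵥ r) i : ℝ) := by
  simp only [mul_apply, diagonal_apply, mul_ite, mul_zero, sum_ite_eq', mem_univ, if_true,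
    star_apply, Complex.star_def, mulVec, dotProduct, of_apply, Complex.ofReal_sum,
    Complex.ofReal_mul, Complex.normSq_eq_conj_mul_self]
  exact sum_congr rfl fun j _ => by ring

theorem Matrix.IsHermitian.eq_conj_diagonal {A : Matrix n n ℂ} (hA : A.IsHermitian) :
    A = (hA.eigenvectorUnitary : Matrix n n ℂ) * diagonal (fun i => (hA.eigenvalues i : ℂ))
      * star (hA.eigenvectorUnitary : Matrix n n ℂ) :=
  hA.spectral_theorem

theorem isHermitian_conj_diagonal (W : Matrix n n ℂ) (r : n → ℝ) :
    (W * diagonal (fun i => (r i : ℂ)) * star W).IsHermitian :=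
  isHermitian_mul_mul_conjTranspose W
    (isHermitian_diagonal_of_self_adjoint _ (funext fun i => Complex.conj_ofReal (r i)))

open Polynomial in
theorem Matrix.IsHermitian.sum_comp_eigenvalues_of_eq_conj {A : Matrix n n ℂ} (hA : A.IsHermitian)
    {W : Matrix n n ℂ} (hW : W ∈ unitaryGroup n ℂ) {r : n → ℝ}
    (h : A = W * diagonal (fun i => (r i : ℂ)) * star W) (g : ℝ → ℝ) :
    ∑ i, g (hA.eigenvalues i) = ∑ i, g (r i) := by
  have hcharpoly : A.charpoly = (diagonal fun i => (r i : ℂ)).charpoly := by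
    rw [h, charpoly_mul_comm, ← mul_assoc, mem_unitaryGroup_iff'.mp hW, one_mul]
  have hspec : univ.val.map hA.eigenvalues = univ.val.map r := by
    apply Multiset.map_injective Complex.ofReal_injective
    have := hA.roots_charpoly_eq_eigenvalues
    rw [hcharpoly, charpoly_diagonal,
      roots_prod _ _ (prod_ne_zero_iff.mpr fun i _ => X_sub_C_ne_zero _)] at this
    simpa [Multiset.map_map] using this.symm
  have := congr_arg (fun s => (s.map g).sum) hspec
  rwa [Multiset.map_map, Multiset.map_map] at this

theorem vnEntropy_eq_of_eq_conj {A W : Matrix n n ℂ} (hW : W ∈ unitaryGroup n ℂ) {r : n → ℝ}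
    (h : A = W * diagonal (fun i => (r i : ℂ)) * star W) :
    vnEntropy A = ∑ i, Real.negMulLog (r i) := by
  have hA : A.IsHermitian := h ▸ isHermitian_conj_diagonal W r
  rw [vnEntropy, dif_pos hA, hA.sum_comp_eigenvalues_of_eq_conj hW h]

theorem vnEntropy_unitary_conj {A U : Matrix n n ℂ} (hA : A.IsHermitian)
    (hU : U ∈ unitaryGroup n ℂ) : vnEntropy (U * A * star U) = vnEntropy A := by
  rw [vnEntropy_eq_of_eq_conj (mul_mem hU hA.eigenvectorUnitary.2) (r := hA.eigenvalues),
    vnEntropy, dif_pos hA]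
  conv_lhs => rw [hA.eq_conj_diagonal]
  simp only [star_mul, mul_assoc]

theorem vnEntropy_le_sum_negMulLog_diag {σ : Matrix n n ℂ} (hσ : σ.PosSemidef) :
    vnEntropy σ ≤ ∑ i, Real.negMulLog (σ i i).re := by
  have hdiag : ∀ i, σ i i = (((of fun i j => Complex.normSq (hσ.1.eigenvectorUnitary i j))
      *ᵥ hσ.1.eigenvalues) i : ℝ) := fun i =>
    (congr_fun₂ hσ.1.eq_conj_diagonal i i).trans (conj_diagonal_apply_self _ _ i)
  rw [vnEntropy, dif_pos hσ.1]
  simpa only [hdiag, Complex.ofReal_re] using sum_negMulLog_le_sum_negMulLog_mulVec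
    (normSq_mem_doublyStochastic hσ.1.eigenvectorUnitary.2) hσ.eigenvalues_nonneg

section GibbsWeights

omit [DecidableEq n]
variable (β : ℝ) (E : n → ℝ)

def gibbsWeights (i : n) : ℝ :=
  Real.exp (-(β * E i)) / ∑ j, Real.exp (-(β * E j))

variable [Nonempty n]

theorem sum_exp_neg_mul_pos : 0 < ∑ j, Real.exp (-(β * E j)) :=
  sum_pos (fun _ _ => Real.exp_pos _) univ_nonempty

theorem gibbsWeights_pos (i : n) : 0 < gibbsWeights β E i :=
  div_pos (Real.exp_pos _) (sum_exp_neg_mul_pos β E)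

theorem sum_gibbsWeights : ∑ i, gibbsWeights β E i = 1 := by
  simp only [gibbsWeights, ← sum_div, div_self (sum_exp_neg_mul_pos β E).ne']

theorem neg_log_gibbsWeights (i : n) :
    -Real.log (gibbsWeights β E i) = β * E i + Real.log (∑ j, Real.exp (-(β * E j))) := by
  rw [gibbsWeights, Real.log_div (Real.exp_ne_zero _) (sum_exp_neg_mul_pos β E).ne',
    Real.log_exp]
  ring

theorem sum_negMulLog_gibbsWeights :
    ∑ i, Real.negMulLog (gibbsWeights β E i)
      = β * ∑ i, E i * gibbsWeights β E i + Real.log (∑ j, Real.exp (-(β * E j))) := by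
  calc ∑ i, Real.negMulLog (gibbsWeights β E i)
      = ∑ i, gibbsWeights β E i * (β * E i + Real.log (∑ j, Real.exp (-(β * E j)))) :=
        sum_congr rfl fun i _ => by rw [← neg_log_gibbsWeights, Real.negMulLog, neg_mul, mul_neg]
    _ = _ := by
        simp only [mul_add, sum_add_distrib, ← sum_mul, sum_gibbsWeights, one_mul, mul_sum]
        exact congrArg (· + _) (sum_congr rfl fun i _ => by ring)

end GibbsWeights

theorem trace_diagonal_mul (c : n → ℂ) (M : Matrix n n ℂ) :
    (diagonal c * M).trace = ∑ i, c i * M i i := by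
  simp [trace, diagonal_mul]

theorem vnEntropy_le_energy_add_log_partition [Nonempty n] {σ : Matrix n n ℂ} (hσ : IsDensity σ)
    (β : ℝ) (E : n → ℝ) :
    vnEntropy σ ≤ β * ((diagonal (fun i => (E i : ℂ)) * σ).trace).re
      + Real.log (∑ i, Real.exp (-(β * E i))) := by
  have hdiag_sum : ∑ i, (σ i i).re = 1 := by
    simpa [trace] using congr_arg Complex.re hσ.2
  calc vnEntropy σ ≤ ∑ i, Real.negMulLog (σ i i).re := vnEntropy_le_sum_negMulLog_diag hσ.1
    _ ≤ ∑ i, (σ i i).re * -Real.log (gibbsWeights β E i) :=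
        sum_negMulLog_le_sum_mul_neg_log (fun i => (Complex.nonneg_iff.mp hσ.1.diag_nonneg).1)
          (gibbsWeights_pos β E) (by rw [hdiag_sum, sum_gibbsWeights])
    _ = _ := by
        simp only [neg_log_gibbsWeights, mul_add, sum_add_distrib, ← sum_mul, hdiag_sum, one_mul,
          trace_diagonal_mul, Complex.re_sum, Complex.re_ofReal_mul, mul_sum]
        exact congrArg (· + _) (sum_congr rfl fun i _ => by ring)

theorem matFun_of_isHermitian (f : ℝ → ℝ) {A : Matrix n n ℂ} (hA : A.IsHermitian) :
    matFun f A = (hA.eigenvectorUnitary : Matrix n n ℂ)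
      * diagonal (fun i => (f (hA.eigenvalues i) : ℂ))
      * star (hA.eigenvectorUnitary : Matrix n n ℂ) :=
  dif_pos hA

theorem isHermitian_diagonal_ofReal (E : n → ℝ) : (diagonal fun i => (E i : ℂ)).IsHermitian := by
  simpa using isHermitian_conj_diagonal 1 E

theorem sum_comp_eigenvalues_diagonal (E : n → ℝ) (g : ℝ → ℝ) :
    ∑ i, g ((isHermitian_diagonal_ofReal E).eigenvalues i) = ∑ i, g (E i) :=
  (isHermitian_diagonal_ofReal E).sum_comp_eigenvalues_of_eq_conj (one_mem _) (by simp) g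

theorem gibbsZ_diagonal (β : ℝ) (E : n → ℝ) :
    gibbsZ β (diagonal fun i => (E i : ℂ)) = ∑ i, Real.exp (-(β * E i)) := by
  have hH := isHermitian_diagonal_ofReal E
  rw [gibbsZ, matFun_of_isHermitian _ hH, trace_mul_cycle,
    mem_unitaryGroup_iff'.mp hH.eigenvectorUnitary.2, one_mul, trace_diagonal,
    ← Complex.ofReal_sum, Complex.ofReal_re,
    sum_comp_eigenvalues_diagonal E fun t => Real.exp (-(β * t))]

theorem vnEntropy_gibbs_diagonal (β : ℝ) (E : n → ℝ) :
    vnEntropy (gibbs β (diagonal fun i => (E i : ℂ)))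
      = ∑ i, Real.negMulLog (gibbsWeights β E i) := by
  have hH := isHermitian_diagonal_ofReal E
  have hconj : gibbs β (diagonal fun i => (E i : ℂ)) = (hH.eigenvectorUnitary : Matrix n n ℂ)
      * diagonal (fun i =>
          ((Real.exp (-(β * hH.eigenvalues i)) / ∑ j, Real.exp (-(β * E j)) : ℝ) : ℂ))
      * star (hH.eigenvectorUnitary : Matrix n n ℂ) := by
    rw [gibbs, gibbsZ_diagonal, matFun_of_isHermitian _ hH, ← smul_mul_assoc, ← mul_smul_comm,
      ← diagonal_smul]
    simp only [Pi.smul_def, smul_eq_mul, Complex.ofReal_div, inv_mul_eq_div]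
  rw [vnEntropy_eq_of_eq_conj hH.eigenvectorUnitary.2 hconj,
    sum_comp_eigenvalues_diagonal E fun t =>
      Real.negMulLog (Real.exp (-(β * t)) / ∑ j, Real.exp (-(β * E j)))]
  rfl

omit [DecidableEq n] in
theorem isDensity_inv_smul {M : Matrix n n ℂ} (hM : M.PosSemidef) {p : ℝ} (htr : M.trace = p)
    (hp : p ≠ 0) : IsDensity ((p : ℂ)⁻¹ • M) := by
  rw [← htr]
  exact ⟨hM.smul (inv_nonneg_of_nonneg hM.trace_nonneg), by
    rw [trace_smul, smul_eq_mul, inv_mul_cancel₀ (htr ▸ Complex.ofReal_ne_zero.mpr hp)]⟩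

omit [DecidableEq n] in
theorem smul_eq_of_eq_inv_smul {M ρ : Matrix n n ℂ} (hM : M.PosSemidef) {p : ℝ}
    (htr : M.trace = p) (hρ : p ≠ 0 → ρ = (p : ℂ)⁻¹ • M) : (p : ℂ) • ρ = M := by
  rcases eq_or_ne p 0 with h | h
  · rw [h, Complex.ofReal_zero, zero_smul, eq_comm, ← hM.trace_eq_zero_iff, htr, h,
      Complex.ofReal_zero]
  · rw [hρ h, smul_smul, mul_inv_cancel₀ (Complex.ofReal_ne_zero.mpr h), one_smul]

theorem IsDensity.unitary_conj {ρ U : Matrix n n ℂ} (hρ : IsDensity ρ) (hU : IsUnitaryMat U) :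
    IsDensity (U * ρ * star U) :=
  ⟨hρ.1.mul_mul_conjTranspose_same U, by
    rw [trace_mul_cycle, mem_unitaryGroup_iff'.mp hU, one_mul, hρ.2]⟩

omit [DecidableEq n] in
theorem re_trace_mul_sum_smul {ι : Type*} [Fintype ι] (A : Matrix n n ℂ) (p : ι → ℝ)
    (ρ : ι → Matrix n n ℂ) :
    (A * ∑ x, (p x : ℂ) • ρ x).trace.re = ∑ x, p x * (A * ρ x).trace.re := by
  simp only [mul_sum, Matrix.mul_smul, trace_sum, trace_smul, Complex.re_sum, smul_eq_mul,
    Complex.re_ofReal_mul]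

theorem sum_mul_vnEntropy_add_extracted_energy_le [Nonempty n] {ι : Type*} [Fintype ι]
    (β : ℝ) (E : n → ℝ) {p : ι → ℝ} {ρ U : ι → Matrix n n ℂ} (hp : ∀ x, 0 ≤ p x)
    (hρ : ∀ x, p x ≠ 0 → IsDensity (ρ x)) (hU : ∀ x, IsUnitaryMat (U x))
    (havg : ∑ x, (p x : ℂ) • ρ x = diagonal fun i => (gibbsWeights β E i : ℂ)) :
    ∑ x, p x * vnEntropy (ρ x)
      + β * ∑ x, p x * (((diagonal fun i => (E i : ℂ)) * (ρ x - U x * ρ x * star (U x))).trace).re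
      ≤ vnEntropy (gibbs β (diagonal fun i => (E i : ℂ))) := by
  set H : Matrix n n ℂ := diagonal fun i => (E i : ℂ)
  set logZ := Real.log (∑ i, Real.exp (-(β * E i)))
  have hbound : ∀ x, p x * vnEntropy (ρ x)
      ≤ p x * (β * (H * (U x * ρ x * star (U x))).trace.re + logZ) := by
    intro x
    rcases eq_or_ne (p x) 0 with h | h
    · simp [h]
    · rw [← vnEntropy_unitary_conj (hρ x h).1.1 (hU x)]
      exact mul_le_mul_of_nonneg_left
        (vnEntropy_le_energy_add_log_partition ((hρ x h).unitary_conj (hU x)) β E) (hp x)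
  have hsum_p : ∑ x, p x = 1 := by
    calc ∑ x, p x = ∑ x, p x * (1 * ρ x).trace.re := sum_congr rfl fun x _ => by
          rcases eq_or_ne (p x) 0 with h | h
          · simp [h]
          · simp [(hρ x h).2]
      _ = 1 := by
          rw [← re_trace_mul_sum_smul, havg, one_mul, trace_diagonal, ← Complex.ofReal_sum,
            sum_gibbsWeights, Complex.ofReal_re]
  have hsum_energy : ∑ x, p x * (H * ρ x).trace.re = ∑ i, E i * gibbsWeights β E i := by
    rw [← re_trace_mul_sum_smul, havg, diagonal_mul_diagonal, trace_diagonal, Complex.re_sum]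
    simp
  have hsum_bound := sum_le_sum fun x (_ : x ∈ univ) => hbound x
  simp only [mul_add, sum_add_distrib, ← sum_mul, hsum_p, one_mul, mul_left_comm (p _) β,
    ← mul_sum] at hsum_bound
  simp only [mul_sub, trace_sub, Complex.sub_re, sum_sub_distrib]
  rw [vnEntropy_gibbs_diagonal, sum_negMulLog_gibbsWeights, ← hsum_energy]
  linarith

section PartialTrace

variable {m k : Type*} [Fintype m] [Fintype k]

theorem outer_posSemidef (v : m → ℂ) : (outer v).PosSemidef :=
  posSemidef_vecMulVec_self_star v

theorem trace_outer (v : m → ℂ) : (outer v).trace = star v ⬝ᵥ v := by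
  simp only [trace, Matrix.diag, outer, of_apply, dotProduct, Pi.star_apply, Complex.star_def,
    mul_comm]

theorem ofReal_re_star_dotProduct_self (v : m → ℂ) : ((star v ⬝ᵥ v).re : ℂ) = star v ⬝ᵥ v :=
  (Complex.eq_re_of_ofReal_le (r := 0)
    (by rw [Complex.ofReal_zero]; exact dotProduct_star_self_nonneg v)).symm

theorem outer_mulVec (M : Matrix m m ℂ) (v : m → ℂ) : outer (M *ᵥ v) = M * outer v * Mᴴ := by
  change vecMulVec _ (star _) = M * vecMulVec v (star v) * Mᴴ
  rw [star_mulVec, mul_vecMulVec, vecMulVec_mul]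

theorem trace_ptraceFst (M : Matrix (m × k) (m × k) ℂ) : (ptraceFst M).trace = M.trace := by
  simp only [trace, Matrix.diag, ptraceFst, of_apply, Fintype.sum_prod_type]
  exact sum_comm

theorem trace_ptraceSnd (M : Matrix (m × k) (m × k) ℂ) : (ptraceSnd M).trace = M.trace := by
  simp only [trace, Matrix.diag, ptraceSnd, of_apply, Fintype.sum_prod_type]

omit [Fintype k] in
theorem ptraceFst_sum {ι : Type*} (s : Finset ι) (M : ι → Matrix (m × k) (m × k) ℂ) :
    ptraceFst (∑ x ∈ s, M x) = ∑ x ∈ s, ptraceFst (M x) := by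
  ext
  simp only [ptraceFst, of_apply, Matrix.sum_apply]
  exact sum_comm

omit [Fintype m] in
theorem ptraceSnd_sum {ι : Type*} (s : Finset ι) (M : ι → Matrix (m × k) (m × k) ℂ) :
    ptraceSnd (∑ x ∈ s, M x) = ∑ x ∈ s, ptraceSnd (M x) := by
  ext
  simp only [ptraceSnd, of_apply, Matrix.sum_apply]
  exact sum_comm

omit [Fintype k] in
theorem Matrix.PosSemidef.ptraceFst {M : Matrix (m × k) (m × k) ℂ} (hM : M.PosSemidef) :
    (_root_.ptraceFst M).PosSemidef := by
  have : _root_.ptraceFst M = ∑ i, M.submatrix (fun j => (i, j)) (fun j => (i, j)) := by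
    ext; simp [_root_.ptraceFst, Matrix.sum_apply]
  rw [this]
  exact posSemidef_sum _ fun i _ => hM.submatrix _

omit [Fintype m] in
theorem Matrix.PosSemidef.ptraceSnd {M : Matrix (m × k) (m × k) ℂ} (hM : M.PosSemidef) :
    (_root_.ptraceSnd M).PosSemidef := by
  have : _root_.ptraceSnd M = ∑ j, M.submatrix (fun i => (i, j)) (fun i => (i, j)) := by
    ext; simp [_root_.ptraceSnd, Matrix.sum_apply]
  rw [this]
  exact posSemidef_sum _ fun j _ => hM.submatrix _

theorem ptraceFst_kronecker_one_mul_comm [DecidableEq k] (A : Matrix m m ℂ)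
    (X : Matrix (m × k) (m × k) ℂ) :
    ptraceFst ((A ⊗ₖ (1 : Matrix k k ℂ)) * X) = ptraceFst (X * (A ⊗ₖ (1 : Matrix k k ℂ))) := by
  ext j j'
  simp only [ptraceFst, of_apply, mul_apply, kroneckerMap_apply, one_apply, Fintype.sum_prod_type,
    mul_ite, mul_one, mul_zero, ite_mul, zero_mul, sum_ite_eq, sum_ite_eq', mem_univ, if_true]
  rw [sum_comm]
  exact sum_congr rfl fun _ _ => sum_congr rfl fun _ _ => mul_comm _ _

theorem sum_ptraceFst_outer_kronecker_one_mulVec [DecidableEq m] [DecidableEq k] {ι : Type*}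
    [Fintype ι] {P : ι → Matrix m m ℂ} (hPH : ∀ x, (P x).IsHermitian)
    (hPP : ∀ x, P x * P x = P x) (hP1 : ∑ x, P x = 1) (v : m × k → ℂ) :
    ∑ x, ptraceFst (outer ((P x ⊗ₖ (1 : Matrix k k ℂ)) *ᵥ v)) = ptraceFst (outer v) := by
  have hterm : ∀ x, ptraceFst (outer ((P x ⊗ₖ (1 : Matrix k k ℂ)) *ᵥ v))
      = ptraceFst (outer v * (P x ⊗ₖ (1 : Matrix k k ℂ))) := by
    intro x
    rw [outer_mulVec, conjTranspose_kronecker, conjTranspose_one, (hPH x).eq, mul_assoc,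
      ptraceFst_kronecker_one_mul_comm, mul_assoc, ← mul_kronecker_mul, hPP, one_mul]
  have hsum : ∑ x, P x ⊗ₖ (1 : Matrix k k ℂ) = (∑ x, P x) ⊗ₖ (1 : Matrix k k ℂ) := by
    ext; simp [Matrix.sum_apply, sum_mul]
  simp only [hterm, ← ptraceFst_sum, ← mul_sum, hsum, hP1, one_kronecker_one, mul_one]

theorem ptraceSnd_ptraceFst_outer_prod {a a' b r : Type*} [Fintype a] [Fintype a'] [Fintype r]
    (φ : a × b → ℂ) (χ : a' × r → ℂ) :
    ptraceSnd (ptraceFst (outer fun q : (a × a') × (b × r) => φ (q.1.1, q.2.1) * χ (q.1.2, q.2.2)))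
      = (star χ ⬝ᵥ χ) • ptraceFst (outer φ) := by
  ext b1 b2
  simp only [ptraceSnd, ptraceFst, outer, of_apply, Matrix.smul_apply, smul_eq_mul,
    Fintype.sum_prod_type, dotProduct, Pi.star_apply, map_mul, sum_mul, mul_sum]
  rw [sum_comm]
  refine sum_congr rfl fun _ _ => ?_
  rw [sum_comm]
  refine sum_congr rfl fun _ _ => sum_congr rfl fun _ _ => ?_
  rw [Complex.star_def]
  ring

theorem ptraceFst_outer_diag [DecidableEq m] (c : m → ℂ) :
    ptraceFst (outer fun q : m × m => if q.1 = q.2 then c q.1 else 0)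
      = diagonal fun i => c i * star (c i) := by
  ext i j
  by_cases h : i = j
  · subst h; simp [ptraceFst, outer]
  · simp [ptraceFst, outer, h]

theorem ptraceFst_outer_sqrt_diag [DecidableEq m] {q : m → ℝ} (hq : ∀ i, 0 ≤ q i) :
    ptraceFst (outer fun x : m × m => if x.1 = x.2 then ((Real.sqrt (q x.1) : ℝ) : ℂ) else 0)
      = diagonal fun i => (q i : ℂ) := by
  rw [ptraceFst_outer_diag fun i => ((Real.sqrt (q i) : ℝ) : ℂ)]
  congr 1
  funext i
  rw [Complex.star_def, Complex.conj_ofReal, ← Complex.ofReal_mul, Real.mul_self_sqrt (hq i)]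

theorem star_dotProduct_self_normalized_maxEnt {d : ℕ} (hd : 0 < d) :
    (star fun x : Fin d × Fin d => if x.1 = x.2 then ((Real.sqrt d)⁻¹ : ℂ) else 0)
      ⬝ᵥ (fun x : Fin d × Fin d => if x.1 = x.2 then ((Real.sqrt d)⁻¹ : ℂ) else 0) = 1 := by
  rw [← trace_outer, ← trace_ptraceFst, ptraceFst_outer_diag fun _ => ((Real.sqrt d)⁻¹ : ℂ),
    trace_diagonal]
  simp only [sum_const, card_univ, Fintype.card_fin, nsmul_eq_mul, star_inv₀, Complex.star_def,
    Complex.conj_ofReal, ← mul_inv, ← Complex.ofReal_mul, Real.mul_self_sqrt (Nat.cast_nonneg d),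
    Complex.ofReal_natCast]
  exact mul_inv_cancel₀ (Nat.cast_ne_zero.mpr hd.ne')

end PartialTrace

theorem QET_QIT_tradeoff_thermal_general {d : ℕ} (hd : 0 < d) {ι : Type*} [Fintype ι]
    (En : Fin d → ℝ) (β : ℝ)
    (Ham : Matrix (Fin d) (Fin d) ℂ)
    (hHam : Ham = Matrix.diagonal fun x => (En x : ℂ))
    (Z : ℝ) (hZ : Z = ∑ x, Real.exp (-(β * En x)))
    -- thermal field double state on A ⊗ B (in the energy eigenbasis)
    (tfd : Fin d × Fin d → ℂ)
    (htfd : tfd = fun q =>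
      if q.1 = q.2 then (Real.sqrt (Real.exp (-(β * En q.1)) / Z) : ℂ) else 0)
    -- maximally entangled state on A' ⊗ R
    (Phi : Fin d × Fin d → ℂ)
    (hPhi : Phi = fun q => if q.1 = q.2 then ((Real.sqrt d)⁻¹ : ℂ) else 0)
    -- initial global state, indexed by (A × A') × (B × R)
    (ψ : (Fin d × Fin d) × (Fin d × Fin d) → ℂ)
    (hψ : ψ = fun q => tfd (q.1.1, q.2.1) * Phi (q.1.2, q.2.2))
    -- rank-one projective measurement on A × A'
    (P : ι → Matrix (Fin d × Fin d) (Fin d × Fin d) ℂ)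
    (hrank1 : ∀ x, ∃ v, P x = outer v)
    (hproj : ∀ x, P x * P x = P x)
    (hsumP : ∑ x, P x = 1)
    -- conditional unitaries on B
    (U : ι → Matrix (Fin d) (Fin d) ℂ) (hU : ∀ x, IsUnitaryMat (U x))
    -- post-measurement global vectors, outcome probabilities, Bob's states
    (w : ι → (Fin d × Fin d) × (Fin d × Fin d) → ℂ)
    (hw : ∀ x, w x =
      (P x ⊗ₖ (1 : Matrix (Fin d × Fin d) (Fin d × Fin d) ℂ)) *ᵥ ψ)
    (p : ι → ℝ) (hp : ∀ x, p x = (star (w x) ⬝ᵥ w x).re)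
    (ρ : ι → Matrix (Fin d) (Fin d) ℂ)
    (hρ : ∀ x, p x ≠ 0 →
      ρ x = ((p x : ℂ))⁻¹ • ptraceSnd (ptraceFst (outer (w x)))) :
    ∑ x, p x * vnEntropy (ρ x)
      + β * ∑ x, p x * ((Ham * (ρ x - U x * ρ x * star (U x))).trace).re
      ≤ vnEntropy (gibbs β Ham) := by
  have : Nonempty (Fin d) := ⟨⟨0, hd⟩⟩
  subst hHam hZ
  have hPH : ∀ x, (P x).IsHermitian := fun x => by
    obtain ⟨v, hv⟩ := hrank1 x
    exact hv ▸ (outer_posSemidef v).1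
  have hbob_psd : ∀ x, (ptraceSnd (ptraceFst (outer (w x)))).PosSemidef := fun x =>
    (outer_posSemidef _).ptraceFst.ptraceSnd
  have htrace : ∀ x, (ptraceSnd (ptraceFst (outer (w x)))).trace = p x := fun x => by
    rw [trace_ptraceSnd, trace_ptraceFst, trace_outer, hp x, ofReal_re_star_dotProduct_self]
  have hmarg : ptraceSnd (ptraceFst (outer ψ)) = diagonal fun i => (gibbsWeights β En i : ℂ) := by
    rw [hψ, ptraceSnd_ptraceFst_outer_prod, hPhi, star_dotProduct_self_normalized_maxEnt hd,
      one_smul, htfd]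
    exact ptraceFst_outer_sqrt_diag (q := gibbsWeights β En) fun i => (gibbsWeights_pos β En i).le
  refine sum_mul_vnEntropy_add_extracted_energy_le β En
    (fun x => Complex.zero_le_real.mp (htrace x ▸ (hbob_psd x).trace_nonneg))
    (fun x h => hρ x h ▸ isDensity_inv_smul (hbob_psd x) (htrace x) h) hU ?_
  simp only [fun x => smul_eq_of_eq_inv_smul (hbob_psd x) (htrace x) (hρ x), ← ptraceSnd_sum, hw,
    sum_ptraceFst_outer_kronecker_one_mulVec hPH hproj hsumP, hmarg]

/-- Theorem 1 of the paper: for any rank-one projective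
measurement on `AA'` of the thermal field double ⊗ Bell state, followed by
conditional unitaries on `B`, the average teleported entanglement entropy plus
`β` times the average extracted energy is bounded by the thermal entropy. -/
theorem QET_QIT_tradeoff_thermal {d : ℕ} (hd : 0 < d) {ι : Type*} [Fintype ι]
    (En : Fin d → ℝ) (β : ℝ) (hβ : 0 < β)
    (Ham : Matrix (Fin d) (Fin d) ℂ)
    (hHam : Ham = Matrix.diagonal fun x => (En x : ℂ))
    (Z : ℝ) (hZ : Z = ∑ x, Real.exp (-(β * En x)))
    -- thermal field double state on A ⊗ B (in the energy eigenbasis)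
    (tfd : Fin d × Fin d → ℂ)
    (htfd : tfd = fun q =>
      if q.1 = q.2 then (Real.sqrt (Real.exp (-(β * En q.1)) / Z) : ℂ) else 0)
    -- maximally entangled state on A' ⊗ R
    (Phi : Fin d × Fin d → ℂ)
    (hPhi : Phi = fun q => if q.1 = q.2 then ((Real.sqrt d)⁻¹ : ℂ) else 0)
    -- initial global state, indexed by (A × A') × (B × R)
    (ψ : (Fin d × Fin d) × (Fin d × Fin d) → ℂ)
    (hψ : ψ = fun q => tfd (q.1.1, q.2.1) * Phi (q.1.2, q.2.2))
    -- rank-one projective measurement on A × A'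
    (P : ι → Matrix (Fin d × Fin d) (Fin d × Fin d) ℂ)
    (hrank1 : ∀ x, ∃ v, P x = outer v)
    (hproj : ∀ x, P x * P x = P x)
    (hsumP : ∑ x, P x = 1)
    -- conditional unitaries on B
    (U : ι → Matrix (Fin d) (Fin d) ℂ) (hU : ∀ x, IsUnitaryMat (U x))
    -- post-measurement global vectors, outcome probabilities, Bob's states
    (w : ι → (Fin d × Fin d) × (Fin d × Fin d) → ℂ)
    (hw : ∀ x, w x =
      (P x ⊗ₖ (1 : Matrix (Fin d × Fin d) (Fin d × Fin d) ℂ)) *ᵥ ψ)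
    (p : ι → ℝ) (hp : ∀ x, p x = (star (w x) ⬝ᵥ w x).re)
    (ρ : ι → Matrix (Fin d) (Fin d) ℂ)
    (hρ : ∀ x, p x ≠ 0 →
      ρ x = ((p x : ℂ))⁻¹ • ptraceSnd (ptraceFst (outer (w x)))) :
    ∑ x, p x * vnEntropy (ρ x)
      + β * ∑ x, p x * ((Ham * (ρ x - U x * ρ x * star (U x))).trace).re
      ≤ vnEntropy (gibbs β Ham) :=
  QET_QIT_tradeoff_thermal_general hd En β Ham hHam Z hZ tfd htfd Phi hPhi ψ hψ P hrank1 hproj hsumP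
    U hU w hw p hp ρ hρ

end
end

section
/- (Complete passivity of Gibbs states) Let H be Hermitian on a finite-dimensional space, β > 0, and τ_β = e^{-βH}/Z. For every n ≥ 1 and every unitary U on the n-fold tensor product, Tr(H_n U τ_β^{⊗n} U†) ≥ Tr(H_n τ_β^{⊗n}), where H_n = Σ_{i=1}^n H^{(i)} is the sum of single-copy Hamiltonians. -/
/-!
Diagonalize `H = V D V†`. Then `V^{⊗m}` diagonalizes both `H_m`, with eigenvalues
`E f = Σᵢ λ (f i)`, and `τ_β^{⊗m}`, with eigenvalues `Z⁻ᵐ e^{-β E f}`; so `τ_β^{⊗m}` is the Gibbs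
state of `H_m` and it suffices to show that a Gibbs state is passive in an eigenbasis. For a
unitary `M` the matrix `S f g = |M f g|²` is doubly stochastic and the energy after `M` is
`Σ S f g E f p g`. Convexity of `exp` gives `(E f - E g) p g ≥ (p g - p f) / β`, and the right-hand
side averages to zero against `S`.
-/

open Matrix BigOperators Finset
open scoped Kronecker ComplexOrder

noncomputable section

variable {n : Type*} [Fintype n] [DecidableEq n]

namespace Matrix

section PiKronecker

variable {ι κ R : Type*} [Fintype ι]

def piKronecker [CommSemiring R] (A : ι → Matrix κ κ R) : Matrix (ι → κ) (ι → κ) R :=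
  of fun f g => ∏ i, A i (f i) (g i)

@[simp]
lemma piKronecker_apply [CommSemiring R] (A : ι → Matrix κ κ R) (f g : ι → κ) :
    piKronecker A f g = ∏ i, A i (f i) (g i) := rfl

lemma piKronecker_mul [Fintype κ] [CommSemiring R] [DecidableEq ι] (A B : ι → Matrix κ κ R) :
    piKronecker A * piKronecker B = piKronecker fun i => A i * B i := by
  ext f g
  simp only [mul_apply, piKronecker_apply, ← Finset.prod_mul_distrib]
  exact (Fintype.prod_sum fun i x => A i (f i) x * B i x (g i)).symm

lemma piKronecker_diagonal [CommSemiring R] [DecidableEq κ] (c : ι → κ → R) :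
    piKronecker (fun i => diagonal (c i)) = diagonal fun f => ∏ i, c i (f i) := by
  ext f g
  by_cases hfg : f = g
  · simp [hfg]
  · obtain ⟨i, hi⟩ := Function.ne_iff.mp hfg
    simp only [piKronecker_apply, diagonal_apply_ne _ hfg]
    exact Finset.prod_eq_zero (Finset.mem_univ i) (diagonal_apply_ne _ hi)

lemma piKronecker_one [CommSemiring R] [DecidableEq κ] :
    piKronecker (fun _ : ι => (1 : Matrix κ κ R)) = 1 := by
  simpa using piKronecker_diagonal (ι := ι) fun _ _ => (1 : R)

lemma star_piKronecker [CommSemiring R] [StarRing R] (A : ι → Matrix κ κ R) :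
    star (piKronecker A) = piKronecker fun i => star (A i) := by
  ext f g
  simp [star_apply, star_prod]

lemma piKronecker_mem_unitaryGroup [Fintype κ] [CommRing R] [StarRing R] [DecidableEq ι]
    [DecidableEq κ] {V : ι → Matrix κ κ R} (hV : ∀ i, V i ∈ unitaryGroup κ R) :
    piKronecker V ∈ unitaryGroup (ι → κ) R := by
  rw [mem_unitaryGroup_iff, star_piKronecker, piKronecker_mul]
  simp only [fun i => mem_unitaryGroup_iff.mp (hV i), piKronecker_one]

lemma piKronecker_conj [Fintype κ] [CommSemiring R] [StarRing R] [DecidableEq ι]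
    (V A : ι → Matrix κ κ R) :
    piKronecker (fun i => V i * A i * star (V i)) =
      piKronecker V * piKronecker A * star (piKronecker V) := by
  rw [star_piKronecker, piKronecker_mul, piKronecker_mul]

lemma piKronecker_mulSingle [CommSemiring R] [DecidableEq ι] [DecidableEq κ] (i : ι)
    (A : Matrix κ κ R) :
    piKronecker (Pi.mulSingle i A) =
      of fun f g => A (f i) (g i) * ∏ j ∈ Finset.univ.erase i, if f j = g j then 1 else 0 := by
  ext f g
  rw [piKronecker_apply, ← Finset.mul_prod_erase _ _ (Finset.mem_univ i)]
  refine congrArg₂ _ (by simp) (Finset.prod_congr rfl fun j hj => ?_)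
  rw [Pi.mulSingle_eq_of_ne (Finset.ne_of_mem_erase hj), one_apply]

/-- `∑ i, piKronecker (Pi.mulSingle i A)` is the one-site sum `Σᵢ 1 ⊗ ⋯ ⊗ A ⊗ ⋯ ⊗ 1`. -/
lemma sum_piKronecker_mulSingle_conj_diagonal [Fintype κ] [CommRing R] [StarRing R]
    [DecidableEq ι] [DecidableEq κ] {V : Matrix κ κ R} (hV : V ∈ unitaryGroup κ R) (c : κ → R) :
    ∑ i, piKronecker (Pi.mulSingle i (V * diagonal c * star V)) =
      piKronecker (fun _ : ι => V) * diagonal (fun f => ∑ i, c (f i)) *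
        star (piKronecker fun _ : ι => V) := by
  have hsite : ∀ i, Pi.mulSingle i (V * diagonal c * star V) =
      fun j => V * diagonal ((Pi.mulSingle i c : ι → κ → R) j) * star V := by
    intro i; funext j
    rcases eq_or_ne j i with rfl | hji
    · simp
    · simp [Pi.mulSingle_eq_of_ne hji, mem_unitaryGroup_iff.mp hV]
  have hprod : ∀ i (f : ι → κ), ∏ j, (Pi.mulSingle i c : ι → κ → R) j (f j) = c (f i) :=
    fun i f => (Fintype.prod_eq_single i fun j hj => by simp [Pi.mulSingle_eq_of_ne hj]).trans
      (by simp)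
  have hdiag : ∑ i : ι, diagonal (fun f : ι → κ => c (f i)) =
      diagonal fun f => ∑ i, c (f i) := by
    simpa [Finset.sum_fn] using
      (map_sum (diagonalAddMonoidHom (ι → κ) R) (fun i f => c (f i)) Finset.univ).symm
  simp only [hsite, piKronecker_conj, piKronecker_diagonal, hprod, ← Finset.sum_mul,
    ← Finset.mul_sum, hdiag]

end PiKronecker

section Passivity

variable {α : Type*} [Fintype α] [DecidableEq α]

def IsPassive (H ρ : Matrix α α ℂ) : Prop :=
  ∀ U ∈ unitaryGroup α ℂ, (H * ρ).trace.re ≤ (H * (U * ρ * star U)).trace.re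

lemma trace_conj_of_mem_unitaryGroup {W : Matrix α α ℂ} (hW : W ∈ unitaryGroup α ℂ)
    (X : Matrix α α ℂ) : (W * X * star W).trace = X.trace := by
  rw [trace_mul_cycle, mem_unitaryGroup_iff'.mp hW, one_mul]

lemma IsPassive.conj {H ρ W : Matrix α α ℂ} (h : IsPassive H ρ) (hW : W ∈ unitaryGroup α ℂ) :
    IsPassive (W * H * star W) (W * ρ * star W) := by
  intro U hU
  have hcancel : ∀ X, star W * (W * X) = X := fun X => by
    rw [← mul_assoc, mem_unitaryGroup_iff'.mp hW, one_mul]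
  have hM : star W * U * W ∈ unitaryGroup α ℂ :=
    mul_mem (mul_mem (Unitary.star_mem hW) hU) hW
  have hl : W * H * star W * (W * ρ * star W) = W * (H * ρ) * star W := by
    simp only [mul_assoc, hcancel]
  have hr : W * H * star W * (U * (W * ρ * star W) * star U) =
      W * (H * (star W * U * W * ρ * star (star W * U * W))) * star W := by
    simp only [star_mul, star_star, mul_assoc, mem_unitaryGroup_iff.mp hW, mul_one]
  simpa only [hl, hr, trace_conj_of_mem_unitaryGroup hW] using h _ hM

lemma re_trace_diagonal_mul_conj_diagonal (E p : α → ℝ) (U : Matrix α α ℂ) :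
    (diagonal (fun i => (E i : ℂ)) * (U * diagonal (fun i => (p i : ℂ)) * star U)).trace.re =
      ∑ i, ∑ j, Complex.normSq (U i j) * (E i * p j) := by
  simp only [trace, diag_apply, diagonal_mul, Matrix.mul_assoc]
  simp only [mul_apply, diagonal_apply, ite_mul, zero_mul, Finset.sum_ite_eq,
    Finset.mem_univ, if_true, star_apply, Complex.star_def, Finset.mul_sum, Complex.re_sum]
  refine Finset.sum_congr rfl fun i _ => Finset.sum_congr rfl fun j _ => ?_
  rw [show (E i : ℂ) * (U i j * ((p j : ℂ) * (starRingEnd ℂ) (U i j))) =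
      ((Complex.normSq (U i j) * (E i * p j) : ℝ) : ℂ) by
    push_cast; rw [← Complex.mul_conj]; ring, Complex.ofReal_re]

lemma normSq_mem_doublyStochastic {U : Matrix α α ℂ} (hU : U ∈ unitaryGroup α ℂ) :
    (of fun i j => Complex.normSq (U i j)) ∈ doublyStochastic ℝ α := by
  have hsum : ∀ {M : Matrix α α ℂ} (i : α), (M * star M) i i = 1 →
      ∑ j, Complex.normSq (M i j) = 1 := fun {M} i h => by
    apply Complex.ofReal_injective
    simpa [mul_apply, star_apply, Complex.mul_conj] using h
  refine (mem_doublyStochastic_iff_sum).2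
    ⟨fun _ _ => Complex.normSq_nonneg _, fun i => ?_, fun j => ?_⟩
  · exact hsum i (by rw [mem_unitaryGroup_iff.mp hU, one_apply_eq])
  · simpa [star_apply] using hsum (M := star U) j
      (by rw [star_star, mem_unitaryGroup_iff'.mp hU, one_apply_eq])

/-- Averaging over a doubly stochastic `S` kills the potential differences `Φ j - Φ i`. -/
lemma sum_mul_le_sum_doublyStochastic {S : Matrix α α ℝ} (hS : S ∈ doublyStochastic ℝ α)
    {E p Φ : α → ℝ} (h : ∀ i j, Φ j - Φ i ≤ (E i - E j) * p j) :
    ∑ i, E i * p i ≤ ∑ i, ∑ j, S i j * (E i * p j) := by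
  have hΦ : ∑ i, ∑ j, S i j * (Φ j - Φ i) = 0 := by
    simp only [mul_sub, Finset.sum_sub_distrib, ← Finset.sum_mul,
      sum_row_of_mem_doublyStochastic hS, one_mul]
    rw [Finset.sum_comm]
    simp only [← Finset.sum_mul, sum_col_of_mem_doublyStochastic hS, one_mul, sub_self]
  have hdiag : ∑ i, ∑ j, S i j * (E j * p j) = ∑ j, E j * p j := by
    rw [Finset.sum_comm]
    simp only [← Finset.sum_mul, sum_col_of_mem_doublyStochastic hS, one_mul]
  calc ∑ i, E i * p i
      = ∑ i, ∑ j, S i j * (E j * p j + (Φ j - Φ i)) := by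
        simp only [mul_add, Finset.sum_add_distrib, hΦ, hdiag, add_zero]
    _ ≤ ∑ i, ∑ j, S i j * (E i * p j) :=
        Finset.sum_le_sum fun i _ => Finset.sum_le_sum fun j _ =>
          mul_le_mul_of_nonneg_left (by linarith [h i j]) (nonneg_of_mem_doublyStochastic hS)

lemma isPassive_diagonal_of_sub_le {E p Φ : α → ℝ} (h : ∀ i j, Φ j - Φ i ≤ (E i - E j) * p j) :
    IsPassive (diagonal fun i => (E i : ℂ)) (diagonal fun i => (p i : ℂ)) := by
  intro U hU
  rw [diagonal_mul_diagonal, trace_diagonal, re_trace_diagonal_mul_conj_diagonal, Complex.re_sum]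
  simp only [← Complex.ofReal_mul, Complex.ofReal_re]
  exact sum_mul_le_sum_doublyStochastic (normSq_mem_doublyStochastic hU) h

lemma exp_neg_mul_sub_div_le {β : ℝ} (hβ : 0 < β) (a b : ℝ) :
    (Real.exp (-(β * b)) - Real.exp (-(β * a))) / β ≤ (a - b) * Real.exp (-(β * b)) := by
  have htangent := Real.add_one_le_exp (-(β * (a - b)))
  have hsplit : Real.exp (-(β * a)) = Real.exp (-(β * b)) * Real.exp (-(β * (a - b))) := by
    rw [← Real.exp_add]; ring_nf
  rw [div_le_iff₀ hβ, hsplit]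
  nlinarith [Real.exp_pos (-(β * b))]

lemma isPassive_diagonal_gibbs {β C : ℝ} (hβ : 0 < β) (hC : 0 ≤ C) (E : α → ℝ) :
    IsPassive (diagonal fun i => (E i : ℂ))
      (diagonal fun i => ((C * Real.exp (-(β * E i)) : ℝ) : ℂ)) := by
  refine isPassive_diagonal_of_sub_le (Φ := fun i => C * Real.exp (-(β * E i)) / β) fun i j => ?_
  calc C * Real.exp (-(β * E j)) / β - C * Real.exp (-(β * E i)) / β
      = C * ((Real.exp (-(β * E j)) - Real.exp (-(β * E i))) / β) := by ring
    _ ≤ C * ((E i - E j) * Real.exp (-(β * E j))) :=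
        mul_le_mul_of_nonneg_left (exp_neg_mul_sub_div_le hβ _ _) hC
    _ = (E i - E j) * (C * Real.exp (-(β * E j))) := by ring

end Passivity

end Matrix

section Gibbs

variable {α : Type*} [Fintype α] [DecidableEq α] {H : Matrix α α ℂ}

lemma gibbsZ_nonneg (hH : H.IsHermitian) (β : ℝ) : 0 ≤ gibbsZ β H := by
  rw [gibbsZ, matFun, dif_pos hH,
    trace_conj_of_mem_unitaryGroup hH.eigenvectorUnitary.2, trace_diagonal, Complex.re_sum]
  exact Finset.sum_nonneg fun _ _ => (Real.exp_pos _).le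

lemma gibbs_eq_conj_diagonal (hH : H.IsHermitian) (β : ℝ) :
    gibbs β H = (hH.eigenvectorUnitary : Matrix α α ℂ) *
      diagonal (fun x => (((gibbsZ β H)⁻¹ * Real.exp (-(β * hH.eigenvalues x)) : ℝ) : ℂ)) *
      star (hH.eigenvectorUnitary : Matrix α α ℂ) := by
  rw [gibbs, matFun, dif_pos hH, ← smul_mul, ← Matrix.mul_smul, ← diagonal_smul]
  congr 3
  ext x
  push_cast
  rfl

end Gibbs

theorem gibbs_completely_passive_general {d : ℕ}
    (H : Matrix (Fin d) (Fin d) ℂ) (hH : H.IsHermitian) (β : ℝ) (hβ : 0 < β)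
    (m : ℕ)
    (Hn : Matrix (Fin m → Fin d) (Fin m → Fin d) ℂ)
    (hHn : Hn = ∑ i : Fin m, Matrix.of fun f g =>
      H (f i) (g i) * ∏ j ∈ Finset.univ.erase i, (if f j = g j then (1:ℂ) else 0))
    (τn : Matrix (Fin m → Fin d) (Fin m → Fin d) ℂ)
    (hτn : τn = Matrix.of fun f g => ∏ i, gibbs β H (f i) (g i))
    (U : Matrix (Fin m → Fin d) (Fin m → Fin d) ℂ)
    (hU : U ∈ Matrix.unitaryGroup (Fin m → Fin d) ℂ) :
    ((Hn * τn).trace).re ≤ ((Hn * (U * τn * star U)).trace).re := by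
  set V : Matrix (Fin d) (Fin d) ℂ := ↑hH.eigenvectorUnitary
  have hV : V ∈ unitaryGroup (Fin d) ℂ := hH.eigenvectorUnitary.2
  set W := piKronecker fun _ : Fin m => V
  set E : (Fin m → Fin d) → ℝ := fun f => ∑ i, hH.eigenvalues (f i)
  have hHn' : Hn = W * diagonal (fun f => (E f : ℂ)) * star W := by
    have hspec : H = V * diagonal (fun x => (hH.eigenvalues x : ℂ)) * star V := hH.spectral_theorem
    rw [hHn]
    simp only [← piKronecker_mulSingle]
    rw [hspec, sum_piKronecker_mulSingle_conj_diagonal hV]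
    simp [E, W]
  have hτn' : τn = W * diagonal (fun f =>
      (((gibbsZ β H)⁻¹ ^ m * Real.exp (-(β * E f)) : ℝ) : ℂ)) * star W := by
    rw [show τn = piKronecker fun _ => gibbs β H from hτn, gibbs_eq_conj_diagonal hH,
      piKronecker_conj, piKronecker_diagonal]
    congr 3
    ext f
    rw [← Complex.ofReal_prod, Finset.prod_mul_distrib, Finset.prod_const, Finset.card_univ,
      Fintype.card_fin, ← Real.exp_sum, Finset.mul_sum, Finset.sum_neg_distrib]
  rw [hHn', hτn']
  exact (isPassive_diagonal_gibbs hβ (pow_nonneg (inv_nonneg.2 (gibbsZ_nonneg hH β)) m) E).conj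
    (piKronecker_mem_unitaryGroup fun _ => hV) U hU

/-- complete passivity of Gibbs states: for every `n` and every
unitary on the `n`-fold tensor product, no energy can be extracted from
`τ_β^{⊗n}` with respect to `H_n = Σᵢ H⁽ⁱ⁾`. -/
theorem gibbs_completely_passive {d : ℕ}
    (H : Matrix (Fin d) (Fin d) ℂ) (hH : H.IsHermitian) (β : ℝ) (hβ : 0 < β)
    (m : ℕ) (hm : 1 ≤ m)
    (Hn : Matrix (Fin m → Fin d) (Fin m → Fin d) ℂ)
    (hHn : Hn = ∑ i : Fin m, Matrix.of fun f g =>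
      H (f i) (g i) * ∏ j ∈ Finset.univ.erase i, (if f j = g j then (1:ℂ) else 0))
    (τn : Matrix (Fin m → Fin d) (Fin m → Fin d) ℂ)
    (hτn : τn = Matrix.of fun f g => ∏ i, gibbs β H (f i) (g i))
    (U : Matrix (Fin m → Fin d) (Fin m → Fin d) ℂ)
    (hU : U ∈ Matrix.unitaryGroup (Fin m → Fin d) ℂ) :
    ((Hn * τn).trace).re ≤ ((Hn * (U * τn * star U)).trace).re :=
  gibbs_completely_passive_general H hH β hβ m Hn hHn τn hτn U hU

end
end
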